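/- If χ₁ and χ₂ are primitive multiplicative characters on Z/R₁ and Z/R₂, gcd(R₁,R₂) = 1, N = R₁R₂, and χ is the corresponding character on Z/N, then χ is primitive with Gauss sum G(χ) = G(χ₁)·G(χ₂)·χ₁*(e₁/R₂)·χ₂*(e₂/R₁). -/

import Mathlib

open Finset

/-- The `N`-point discrete Fourier transform of `x : ZMod N → ℂ`. -/
noncomputable def dft {N : ℕ} [NeZero N] (x : ZMod N → ℂ) (a : ZMod N) : ℂ :=
  ∑ b : ZMod N, x b * Complex.exp (2 * Real.pi * Complex.I * ((a.val * b.val : ℕ) : ℂ) / (N : ℂ))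

/-- A multiplicative character `χ` on `ZMod M` is primitive if `χ̂ = G(χ)·χ*` everywhere,
where `G(χ) = χ̂(1)` and `χ*` is the inverse (conjugate) character. -/
def IsPrimitiveChar {M : ℕ} [NeZero M] (χ : MulChar (ZMod M) ℂ) : Prop :=
  ∀ a : ZMod M, dft ⇑χ a = dft ⇑χ 1 * χ⁻¹ a

/-!
With `f₁ = e₁ / R₂` and `f₂ = e₂ / R₁` one has `R₂ f₁ + R₁ f₂ = e₁ + e₂ ≡ 1 (mod R₁R₂)`, so the
additive character splits as `e(x / R₁R₂) = e(f₁ x / R₁) · e(f₂ x / R₂)`. Reindexing the sum over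
`ZMod (R₁R₂)` by the Chinese remainder isomorphism then factors `χ̂(a) = χ̂₁(f₁ a) · χ̂₂(f₂ a)`, and
primitivity of `χ₁`, `χ₂` evaluates both factors: at `a = 1` this is the Gauss sum formula, and
in general it gives `χ̂(a) = G(χ) χ⁻¹(a)`.
-/

open ZMod (stdAddChar stdAddChar_apply toCircle_natCast castHom natCast_zmod_val
  natCast_zmod_surjective chineseRemainder)

lemma dft_eq_sum_stdAddChar {N : ℕ} [NeZero N] (x : ZMod N → ℂ) (a : ZMod N) :
    dft x a = ∑ b, x b * stdAddChar (a * b) := by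
  refine sum_congr rfl fun b _ => ?_
  rw [stdAddChar_apply, ← natCast_zmod_val a, ← natCast_zmod_val b, ← Nat.cast_mul,
    toCircle_natCast, natCast_zmod_val, natCast_zmod_val]

lemma stdAddChar_eq_mul_of_crt {R₁ R₂ u₁ u₂ : ℕ} [NeZero R₁] [NeZero R₂]
    (hu : ((R₂ * u₁ + R₁ * u₂ : ℕ) : ZMod (R₁ * R₂)) = 1) (x : ZMod (R₁ * R₂)) :
    stdAddChar x = stdAddChar ((u₁ : ZMod R₁) * castHom (dvd_mul_right R₁ R₂) (ZMod R₁) x) *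
      stdAddChar ((u₂ : ZMod R₂) * castHom (dvd_mul_left R₂ R₁) (ZMod R₂) x) := by
  obtain ⟨k, rfl⟩ := natCast_zmod_surjective x
  have hk : (k : ZMod (R₁ * R₂)) = ((R₂ * u₁ * k + R₁ * u₂ * k : ℕ) : ZMod (R₁ * R₂)) := by
    rw [← add_mul, Nat.cast_mul, hu, one_mul]
  simp only [map_natCast, ← Nat.cast_mul]
  rw [hk]
  simp only [stdAddChar_apply, toCircle_natCast, ← Complex.exp_add]
  congr 1
  have hR₁ : (R₁ : ℂ) ≠ 0 := NeZero.ne _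
  have hR₂ : (R₂ : ℂ) ≠ 0 := NeZero.ne _
  push_cast
  field_simp

lemma dft_eq_mul_dft_of_crt {R₁ R₂ u₁ u₂ : ℕ} [NeZero R₁] [NeZero R₂] (h : R₁.Coprime R₂)
    (hu : ((R₂ * u₁ + R₁ * u₂ : ℕ) : ZMod (R₁ * R₂)) = 1)
    {x : ZMod (R₁ * R₂) → ℂ} {x₁ : ZMod R₁ → ℂ} {x₂ : ZMod R₂ → ℂ}
    (hx : ∀ b, x b = x₁ (castHom (dvd_mul_right R₁ R₂) (ZMod R₁) b) *
      x₂ (castHom (dvd_mul_left R₂ R₁) (ZMod R₂) b)) (a : ZMod (R₁ * R₂)) :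
    dft x a = dft x₁ (u₁ * castHom (dvd_mul_right R₁ R₂) (ZMod R₁) a) *
      dft x₂ (u₂ * castHom (dvd_mul_left R₂ R₁) (ZMod R₂) a) := by
  simp only [dft_eq_sum_stdAddChar, sum_mul_sum, ← Fintype.sum_prod_type']
  refine Fintype.sum_equiv (chineseRemainder h).toEquiv _ _ fun b => ?_
  rw [hx, stdAddChar_eq_mul_of_crt hu, map_mul (castHom _ _), map_mul (castHom _ _)]
  have h₁ : ((chineseRemainder h).toEquiv b).1 = castHom (dvd_mul_right R₁ R₂) (ZMod R₁) b :=
    Prod.fst_zmod_cast b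
  have h₂ : ((chineseRemainder h).toEquiv b).2 = castHom (dvd_mul_left R₂ R₁) (ZMod R₂) b :=
    Prod.snd_zmod_cast b
  rw [h₁, h₂, mul_assoc (u₁ : ZMod R₁), mul_assoc (u₂ : ZMod R₂)]
  ring

lemma natCast_crt_idempotents_add_eq_one {R₁ R₂ e₁ e₂ : ℕ} (h : R₁.Coprime R₂)
    (he₁₁ : e₁ % R₁ = 1 % R₁) (he₁₂ : e₁ % R₂ = 0)
    (he₂₁ : e₂ % R₁ = 0) (he₂₂ : e₂ % R₂ = 1 % R₂) :
    ((R₂ * (e₁ / R₂) + R₁ * (e₂ / R₁) : ℕ) : ZMod (R₁ * R₂)) = 1 := by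
  rw [Nat.mul_div_cancel' (Nat.dvd_of_mod_eq_zero he₁₂),
    Nat.mul_div_cancel' (Nat.dvd_of_mod_eq_zero he₂₁), ← Nat.cast_one,
    ZMod.natCast_eq_natCast_iff, ← Nat.modEq_and_modEq_iff_modEq_mul h]
  exact ⟨by simpa using Nat.ModEq.add he₁₁ (he₂₁.trans (Nat.zero_mod R₁).symm),
    by simpa using Nat.ModEq.add (he₁₂.trans (Nat.zero_mod R₂).symm) he₂₂⟩

theorem stmt8 (R₁ R₂ : ℕ) [NeZero R₁] [NeZero R₂] (h : Nat.Coprime R₁ R₂)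
    (e₁ e₂ : ℕ)
    (he₁₁ : e₁ % R₁ = 1 % R₁) (he₁₂ : e₁ % R₂ = 0)
    (he₂₁ : e₂ % R₁ = 0) (he₂₂ : e₂ % R₂ = 1 % R₂)
    (χ₁ : MulChar (ZMod R₁) ℂ) (χ₂ : MulChar (ZMod R₂) ℂ)
    (hp₁ : IsPrimitiveChar χ₁) (hp₂ : IsPrimitiveChar χ₂)
    (χ : MulChar (ZMod (R₁ * R₂)) ℂ)
    (hχ : ∀ a : ZMod (R₁ * R₂),
      χ a = χ₁ (ZMod.castHom (dvd_mul_right R₁ R₂) (ZMod R₁) a) *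
            χ₂ (ZMod.castHom (dvd_mul_left R₂ R₁) (ZMod R₂) a)) :
    IsPrimitiveChar χ ∧
    dft ⇑χ 1 = dft ⇑χ₁ 1 * dft ⇑χ₂ 1 *
      χ₁⁻¹ ((e₁ / R₂ : ℕ) : ZMod R₁) * χ₂⁻¹ ((e₂ / R₁ : ℕ) : ZMod R₂) := by
  have hdft := dft_eq_mul_dft_of_crt h
    (natCast_crt_idempotents_add_eq_one h he₁₁ he₁₂ he₂₁ he₂₂) hχ
  have hG : dft ⇑χ 1 = dft ⇑χ₁ 1 * dft ⇑χ₂ 1 *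
      χ₁⁻¹ ((e₁ / R₂ : ℕ) : ZMod R₁) * χ₂⁻¹ ((e₂ / R₁ : ℕ) : ZMod R₂) := by
    rw [hdft, map_one, map_one, mul_one, mul_one, hp₁, hp₂]
    ring
  have hinv (a : ZMod (R₁ * R₂)) : χ⁻¹ a = χ₁⁻¹ (castHom (dvd_mul_right R₁ R₂) (ZMod R₁) a) *
      χ₂⁻¹ (castHom (dvd_mul_left R₂ R₁) (ZMod R₂) a) := by
    simp only [MulChar.inv_apply_eq_inv', hχ, mul_inv]
  refine ⟨fun a => ?_, hG⟩
  rw [hdft, hp₁, hp₂, hG, hinv, map_mul, map_mul]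
  ring
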